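/- For every natural number 𝐧 and every c_* ∈ 𝒬_𝐧, there exists an element (r_*, p_*) ∈ ι̃^{-1}(c_*) ⊆ A_𝐧 such that μ_e(p'_*) ≥ μ_e(p_*) for every (r'_*, p'_*) ∈ ι̃^{-1}(c_*) and every positive integer e; moreover, if (r'_*, p'_*) ∈ ι̃^{-1}(c_*) satisfies μ_e(p'_*) = μ_e(p_*) for all positive integers e, then (r'_*, p'_*) = (r_*, p_*). -/

import Mathlib

/-! A partition in `𝒬` lies in `ℛ` exactly when it satisfies local parity conditions: every
even part has an odd number of odd parts above it, and every odd part has multiplicity at most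
`2`, with `2` only if the number of odd parts strictly above it is odd. If `(r, p)` lies over `c`,
all multiplicities of `p` are even, so the odd multiplicities of `r` agree with those of `c`
mod `2`, and so do the numbers of odd parts above each value. The local conditions then bound
every multiplicity of `r` by a number `rCount c v` computed from `c` alone, and the partition
with exactly these multiplicities lies in `ℛ`. This maximal `r` makes `p` minimal in every
multiplicity, and since `p` determines `r` through `c`, the minimizer is unique. -/

/-- A partition: a nonincreasing list of positive integers (possibly empty). -/
def IsPartition (p : List ℕ) : Prop := p.Pairwise (· ≥ ·) ∧ ∀ x ∈ p, 0 < x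

/-- `𝒫̃`: partitions with an even number of parts in which the parts pair up:
`p₁ = p₂, p₃ = p₄, …` (stated 0-indexed). -/
def Ptilde : Set (List ℕ) :=
  {p | IsPartition p ∧ Even p.length ∧ ∀ i, p.getD (2 * i) 0 = p.getD (2 * i + 1) 0}

/-- `𝒮^κ` for `κ ∈ {0,1}`: partitions with all parts even (and, if `κ = 0`,
an even number of parts). -/
def SK (κ : ℕ) : Set (List ℕ) :=
  {r | IsPartition r ∧ (∀ x ∈ r, x % 2 = 0) ∧ (κ = 0 → Even r.length)}

/-- `𝒮^κ_N`. -/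
def SKN (κ N : ℕ) : Set (List ℕ) := {r | r ∈ SK κ ∧ r.sum = N}

/-- `𝒜^κ_{2n} = {(r_*, p_*) ∈ 𝒮^κ × 𝒫̃ : |r_*| + |p_*| = 2n}`. -/
def AK (κ n : ℕ) : Set (List ℕ × List ℕ) :=
  {rp | rp.1 ∈ SK κ ∧ rp.2 ∈ Ptilde ∧ rp.1.sum + rp.2.sum = 2 * n}

/-- The partition whose multiset of parts is the disjoint union of the multisets of
parts of `r` and `p`: sort `r ++ p` nonincreasingly. -/
def pmerge (r p : List ℕ) : List ℕ := (r ++ p).mergeSort (fun a b => decide (b ≤ a))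

/-- `𝒬`: partitions in which every even part has even multiplicity. -/
def Qset : Set (List ℕ) :=
  {c | IsPartition c ∧ ∀ j, j % 2 = 0 → Even (c.count j)}

/-- `𝒬_N`. -/
def QN (N : ℕ) : Set (List ℕ) := {c | c ∈ Qset ∧ c.sum = N}

/-- The odd parts of `l`, listed in (nonincreasing) order with multiplicity:
`r¹ ≥ r² ≥ … ≥ r^s`. -/
def oddParts (l : List ℕ) : List ℕ := l.filter (fun x => x % 2 = 1)

/-- The set `ℛ` (conditions stated with 1-based indices `u` for the list of odd parts;
`(oddParts l).getD (u-1) 0` is `r^u`). -/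
def Rset : Set (List ℕ) :=
  {l | l ∈ Qset ∧
    (l ≠ [] → l.getD 0 0 % 2 = 1) ∧
    (l ≠ [] → Even l.length → l.getD (l.length - 1) 0 % 2 = 1) ∧
    (∀ u, 1 ≤ u → u + 1 ≤ (oddParts l).length → u % 2 = 1 →
        (oddParts l).getD u 0 < (oddParts l).getD (u - 1) 0) ∧
    (∀ u, 1 ≤ u → u + 1 ≤ (oddParts l).length → u % 2 = 0 →
        ∀ k < l.length,
          ¬((oddParts l).getD u 0 < l.getD k 0 ∧ l.getD k 0 < (oddParts l).getD (u - 1) 0))}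

/-- `ℛ_N = ℛ ∩ 𝒬_N`. -/
def RN (N : ℕ) : Set (List ℕ) := {l | l ∈ Rset ∧ l.sum = N}

/-- `A_𝐧 = {(r_*, p_*) ∈ ℛ × 𝒫̃ : |r_*| + |p_*| = 𝐧}`. -/
def An (m : ℕ) : Set (List ℕ × List ℕ) :=
  {rp | rp.1 ∈ Rset ∧ rp.2 ∈ Ptilde ∧ rp.1.sum + rp.2.sum = m}

open List

section SortedLists

variable {α : Type*} [LinearOrder α] {l : List α}

theorem countP_le_eq_countP_lt_add_count (w : α) :
    l.countP (fun x => w ≤ x) = l.countP (fun x => w < x) + l.count w := by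
  induction l with
  | nil => rfl
  | cons a t ih =>
    rcases lt_trichotomy w a with h | rfl | h
    · simp [ih, h, h.le, h.ne']
      omega
    · simp [ih]
      omega
    · simp [ih, h.ne, not_le.mpr h, not_lt.mpr h.le]

theorem List.Pairwise.pred_getElem_iff_lt_countP (hs : l.Pairwise (· ≥ ·)) {P : α → Bool}
    (hP : ∀ x y, x ≤ y → P x → P y) {i : ℕ} (h : i < l.length) :
    P l[i] ↔ i < l.countP P := by
  induction l generalizing i with
  | nil => simp at h
  | cons a t ih =>
    obtain ⟨hat, hts⟩ := pairwise_cons.mp hs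
    by_cases hPa : P a
    · cases i with
      | zero => simp [hPa]
      | succ i => simp [hPa, ih hts (Nat.lt_of_succ_lt_succ h)]
    · have ht0 : t.countP P = 0 := countP_eq_zero.mpr fun x hx hPx => hPa (hP x a (hat x hx) hPx)
      cases i with
      | zero => simp [hPa, ht0]
      | succ i =>
        simp only [getElem_cons_succ, countP_cons, hPa, ht0]
        exact iff_of_false (fun hPx => hPa (hP _ a (hat _ (getElem_mem _)) hPx)) (by simp)

theorem List.Pairwise.lt_getElem_iff (hs : l.Pairwise (· ≥ ·)) (w : α) {i : ℕ}
    (h : i < l.length) : w < l[i] ↔ i < l.countP (fun x => w < x) := by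
  simpa using hs.pred_getElem_iff_lt_countP (P := fun x => w < x)
    (fun x y hxy hx => by simpa using (of_decide_eq_true hx).trans_le hxy) h

theorem List.Pairwise.le_getElem_iff (hs : l.Pairwise (· ≥ ·)) (w : α) {i : ℕ}
    (h : i < l.length) : w ≤ l[i] ↔ i < l.countP (fun x => w ≤ x) := by
  simpa using hs.pred_getElem_iff_lt_countP (P := fun x => w ≤ x)
    (fun x y hxy hx => by simpa using (of_decide_eq_true hx).trans hxy) h

theorem List.Pairwise.getElem_eq_iff (hs : l.Pairwise (· ≥ ·)) (w : α) {i : ℕ}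
    (h : i < l.length) :
    l[i] = w ↔ l.countP (fun x => w < x) ≤ i ∧ i < l.countP (fun x => w < x) + l.count w := by
  rw [← countP_le_eq_countP_lt_add_count, ← hs.le_getElem_iff w h, ← not_lt,
    ← hs.lt_getElem_iff w h, le_antisymm_iff, not_lt, and_comm]

theorem List.Pairwise.getElem_le_getElem (hs : l.Pairwise (· ≥ ·)) {i j : ℕ} (hij : i ≤ j)
    (hj : j < l.length) : l[j] ≤ l[i] := by
  rcases hij.eq_or_lt with rfl | hlt
  · exact le_rfl
  · exact pairwise_iff_getElem.mp hs i j _ hj hlt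

theorem pairsUp_iff_even_count (d : α) :
    ∀ {l : List α}, l.Pairwise (· ≥ ·) →
      ((Even l.length ∧ ∀ i, l.getD (2 * i) d = l.getD (2 * i + 1) d) ↔ ∀ v, Even (l.count v))
  | [], _ => by simp
  | [a], _ => iff_of_false (fun h => by simpa using h.1) (fun h => by simpa using h a)
  | a :: b :: t, hs => by
    have ih := pairsUp_iff_even_count d hs.of_cons.of_cons
    have hget : (∀ i, (a :: b :: t).getD (2 * i) d = (a :: b :: t).getD (2 * i + 1) d) ↔
        a = b ∧ ∀ i, t.getD (2 * i) d = t.getD (2 * i + 1) d := by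
      refine ⟨fun h => ⟨by simpa using h 0, fun i => by simpa [Nat.mul_succ] using h (i + 1)⟩,
        fun ⟨hab, h⟩ i => ?_⟩
      cases i with
      | zero => simpa using hab
      | succ i => simpa [Nat.mul_succ] using h i
    rw [hget, length_cons, length_cons, Nat.even_add_one, Nat.even_add_one, not_not]
    by_cases hab : a = b
    · subst hab
      have hcount : ∀ v, Even ((a :: a :: t).count v) ↔ Even (t.count v) := fun v => by
        by_cases hv : a = v <;> simp [hv, Nat.even_add_one]
      simp only [hcount, true_and, ih]
    · refine iff_of_false (fun h => hab h.2.1) fun h => ?_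
      have hba : b < a := lt_of_le_of_ne ((pairwise_cons.mp hs).1 b mem_cons_self) (Ne.symm hab)
      have ha : a ∉ b :: t := by
        rintro (_ | ⟨_, hat⟩)
        · exact hab rfl
        · exact not_lt_of_ge ((pairwise_cons.mp hs.of_cons).1 a hat) hba
      simpa [count_eq_zero_of_not_mem ha] using h a

end SortedLists

section CountParity

variable {α : Type*} [DecidableEq α]

theorem countP_eq_sum_count {s : Finset α} {l : List α} (hl : ∀ x ∈ l, x ∈ s)
    (P : α → Prop) [DecidablePred P] : l.countP (fun x => P x) = ∑ x ∈ s with P x, l.count x := by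
  rw [← Finset.sum_filter_count_eq_countP]
  refine Finset.sum_subset (Finset.filter_subset_filter _ fun x hx => hl x (mem_toFinset.mp hx))
    fun x _ hx => count_eq_zero_of_not_mem fun hxl => hx ?_
  simp_all

theorem countP_mod_two_eq {l₁ l₂ : List α} (P : α → Prop) [DecidablePred P]
    (h : ∀ w, P w → l₁.count w % 2 = l₂.count w % 2) :
    l₁.countP (fun x => P x) % 2 = l₂.countP (fun x => P x) % 2 := by
  rw [countP_eq_sum_count (s := l₁.toFinset ∪ l₂.toFinset) (by simp_all),
    countP_eq_sum_count (s := l₁.toFinset ∪ l₂.toFinset) (by simp_all),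
    Finset.sum_nat_mod, Finset.sum_nat_mod _ _ fun x => l₂.count x]
  exact congrArg (· % 2) (Finset.sum_congr rfl fun w hw => h w (Finset.mem_filter.mp hw).2)

theorem even_countP_of_even_count {l : List α} (P : α → Prop) [DecidablePred P]
    (h : ∀ w, P w → Even (l.count w)) : Even (l.countP fun x => P x) := by
  rw [← Finset.sum_filter_count_eq_countP]
  exact Finset.even_sum _ fun w hw => h w (Finset.mem_filter.mp hw).2

end CountParity

theorem IsPartition.count_zero {p : List ℕ} (hp : IsPartition p) : p.count 0 = 0 :=
  count_eq_zero_of_not_mem fun h => (hp.2 0 h).false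

theorem mem_Ptilde_iff {p : List ℕ} : p ∈ Ptilde ↔ IsPartition p ∧ ∀ v, Even (p.count v) := by
  refine ⟨fun ⟨hp, hpairs⟩ => ⟨hp, (pairsUp_iff_even_count 0 hp.1).mp hpairs⟩,
    fun ⟨hp, hev⟩ => ⟨hp, (pairsUp_iff_even_count 0 hp.1).mpr hev⟩⟩

theorem pmerge_eq_iff_perm {r p c : List ℕ} (hc : c.Pairwise (· ≥ ·)) :
    pmerge r p = c ↔ (r ++ p).Perm c := by
  refine ⟨fun h => h ▸ (mergeSort_perm _ _).symm, fun h => ?_⟩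
  exact ((mergeSort_perm _ _).trans h).eq_of_pairwise' (pairwise_mergeSort' (· ≥ ·) _) hc

theorem count_add_count_of_pmerge_eq {r p c : List ℕ} (h : pmerge r p = c) (v : ℕ) :
    r.count v + p.count v = c.count v := by
  rw [← count_append, ← h]
  exact ((mergeSort_perm _ _).count_eq v).symm

def oddAbove (l : List ℕ) (v : ℕ) : ℕ := (oddParts l).countP (fun x => v < x)

theorem oddAbove_eq_countP (l : List ℕ) (v : ℕ) :
    oddAbove l v = l.countP (fun x => v < x ∧ x % 2 = 1) := by
  simp [oddAbove, oddParts, countP_filter]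

theorem oddAbove_mod_two_eq {l₁ l₂ : List ℕ}
    (h : ∀ w, w % 2 = 1 → l₁.count w % 2 = l₂.count w % 2) (v : ℕ) :
    oddAbove l₁ v % 2 = oddAbove l₂ v % 2 := by
  simpa only [oddAbove_eq_countP] using countP_mod_two_eq _ fun w hw => h w hw.2

theorem length_mod_two_of_mem_Qset {l : List ℕ} (hl : l ∈ Qset) :
    l.length % 2 = (oddParts l).length % 2 := by
  have hev : Even (l.countP fun x => ¬x % 2 = 1) :=
    even_countP_of_even_count _ fun w hw => hl.2 w (by omega)
  rw [length_eq_countP_add_countP (fun x => x % 2 = 1), oddParts, ← countP_eq_length_filter]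
  rw [Nat.even_iff] at hev
  simp only [decide_eq_true_eq] at hev ⊢
  omega

def Admissible (l : List ℕ) : Prop :=
  (∀ v ∈ l, v % 2 = 0 → oddAbove l v % 2 = 1) ∧
    ∀ v, v % 2 = 1 → 2 ≤ l.count v → l.count v = 2 ∧ oddAbove l v % 2 = 1

section Rset

variable {l : List ℕ}

theorem mem_oddParts {x : ℕ} : x ∈ oddParts l ↔ x ∈ l ∧ x % 2 = 1 := by
  simp [oddParts]

theorem count_oddParts {x : ℕ} (hx : x % 2 = 1) : (oddParts l).count x = l.count x :=
  count_filter (by simpa using hx)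

theorem oddParts_pairwise (hs : l.Pairwise (· ≥ ·)) : (oddParts l).Pairwise (· ≥ ·) :=
  hs.filter _

/-- With an even number of odd parts above it, `v` would precede all odd parts (against the first
condition of `ℛ`), lie in a gap excluded by the fourth, or follow all odd parts, where the length
is even and the last part must be odd by the second. -/
theorem oddAbove_odd_of_mem_Rset (hl : l ∈ Rset) {v : ℕ} (hv : v ∈ l) (he : v % 2 = 0) :
    oddAbove l v % 2 = 1 := by
  obtain ⟨hQ, hhead, hlast, -, hgap⟩ := hl
  have hs := hQ.1.1
  have hos := oddParts_pairwise hs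
  obtain ⟨k, hk, rfl⟩ := getElem_of_mem hv
  set a := oddAbove l l[k]
  by_contra hae
  have hao : a ≤ (oddParts l).length := countP_le_length
  rcases Nat.eq_zero_or_pos a with h0 | hpos
  · have h0l : 0 < l.length := by omega
    have hodd := hhead (ne_nil_of_mem hv)
    rw [getD_eq_getElem _ _ h0l] at hodd
    have hlt : l[k] < l[0] := lt_of_le_of_ne (hs.getElem_le_getElem k.zero_le hk) (by omega)
    have : 0 < a := countP_pos_iff.mpr
      ⟨l[0], mem_oddParts.mpr ⟨getElem_mem _, hodd⟩, by simpa using hlt⟩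
    omega
  rcases hao.lt_or_eq with hlt | heq
  · refine hgap a hpos (by omega) (by omega) k hk ?_
    rw [getD_eq_getElem _ _ hlt, getD_eq_getElem _ _ (by omega : a - 1 < (oddParts l).length),
      getD_eq_getElem _ _ hk]
    have hnlt : ¬l[k] < (oddParts l)[a] := by rw [hos.lt_getElem_iff]; exact lt_irrefl _
    have hodd : (oddParts l)[a] % 2 = 1 := (mem_oddParts.mp (getElem_mem _)).2
    refine ⟨by omega, ?_⟩
    rw [hos.lt_getElem_iff]
    exact Nat.sub_lt hpos one_pos
  · have hlen : Even l.length := by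
      rw [Nat.even_iff, length_mod_two_of_mem_Qset hQ, ← heq]
      omega
    have hl0 : l.length - 1 < l.length := by omega
    have hodd := hlast (ne_nil_of_mem hv) hlen
    rw [getD_eq_getElem _ _ hl0] at hodd
    have hall := countP_eq_length.mp heq _ (mem_oddParts.mpr ⟨getElem_mem hl0, hodd⟩)
    have := hs.getElem_le_getElem (by omega : k ≤ l.length - 1) hl0
    simp only [decide_eq_true_eq] at hall
    omega

theorem count_odd_of_mem_Rset (hl : l ∈ Rset) {v : ℕ} (hv : v % 2 = 1) (h2 : 2 ≤ l.count v) :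
    l.count v = 2 ∧ oddAbove l v % 2 = 1 := by
  obtain ⟨hQ, -, -, hpair, -⟩ := hl
  have hos := oddParts_pairwise hQ.1.1
  set a := oddAbove l v with ha
  have hblock : a + l.count v ≤ (oddParts l).length := by
    rw [ha, oddAbove, ← count_oddParts hv, ← countP_le_eq_countP_lt_add_count]
    exact countP_le_length
  have hv_at : ∀ i (hi : i < (oddParts l).length), a ≤ i → i < a + l.count v →
      (oddParts l)[i] = v := fun i hi h1 h2 =>
    (hos.getElem_eq_iff v hi).mpr ⟨h1, by rw [count_oddParts hv]; exact h2⟩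
  have hstrict : ∀ u (hu : u + 1 < (oddParts l).length), u % 2 = 0 →
      (oddParts l)[u + 1] < (oddParts l)[u] := fun u hu he => by
    have := hpair (u + 1) (by omega) (by omega) (by omega)
    rwa [getD_eq_getElem _ _ hu, Nat.add_sub_cancel, getD_eq_getElem _ _ (by omega)] at this
  have ha_odd : a % 2 = 1 := by
    by_contra he
    have := hstrict a (by omega) (by omega)
    rw [hv_at a (by omega) le_rfl (by omega), hv_at (a + 1) (by omega) (by omega) (by omega)] at this
    exact lt_irrefl _ this
  refine ⟨?_, ha_odd⟩
  by_contra h3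
  have := hstrict (a + 1) (by omega) (by omega)
  rw [hv_at (a + 1) (by omega) (by omega) (by omega),
    hv_at (a + 1 + 1) (by omega) (by omega) (by omega)] at this
  exact lt_irrefl _ this

theorem Admissible.head_odd (hs : l.Pairwise (· ≥ ·)) (hl : Admissible l) (h0 : 0 < l.length) :
    l[0] % 2 = 1 := by
  by_contra he
  have := hl.1 _ (getElem_mem h0) (by omega)
  obtain ⟨x, hx, hlt⟩ := countP_pos_iff.mp (by omega : 0 < oddAbove l l[0])
  obtain ⟨j, hj, rfl⟩ := getElem_of_mem (mem_oddParts.mp hx).1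
  have := hs.getElem_le_getElem j.zero_le hj
  simp only [decide_eq_true_eq] at hlt
  omega

theorem Admissible.last_odd (hQ : l ∈ Qset) (hl : Admissible l) (hlen : Even l.length)
    (h0 : 0 < l.length) : l[l.length - 1] % 2 = 1 := by
  by_contra he
  have hx := hl.1 _ (getElem_mem (by omega : l.length - 1 < l.length)) (by omega)
  have hall : oddAbove l l[l.length - 1] = (oddParts l).length := countP_eq_length.mpr fun y hy => by
    obtain ⟨hyl, hyo⟩ := mem_oddParts.mp hy
    obtain ⟨j, hj, rfl⟩ := getElem_of_mem hyl
    have := hQ.1.1.getElem_le_getElem (by omega : j ≤ l.length - 1) (by omega)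
    simp only [decide_eq_true_eq]
    omega
  have := length_mod_two_of_mem_Qset hQ
  rw [Nat.even_iff] at hlen
  omega

theorem Admissible.oddParts_getElem_lt (hs : l.Pairwise (· ≥ ·)) (hl : Admissible l) {u : ℕ}
    (hu1 : 1 ≤ u) (hu : u < (oddParts l).length) (hodd : u % 2 = 1) :
    (oddParts l)[u] < (oddParts l)[u - 1] := by
  have hos := oddParts_pairwise hs
  by_contra hge
  have heq : (oddParts l)[u - 1] = (oddParts l)[u] :=
    le_antisymm (not_lt.mp hge) (hos.getElem_le_getElem (by omega) hu)
  have hw : (oddParts l)[u] % 2 = 1 := (mem_oddParts.mp (getElem_mem _)).2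
  have hblock := (hos.getElem_eq_iff _ hu).mp rfl
  have hblock' := (hos.getElem_eq_iff _ _).mp heq
  rw [count_oddParts hw] at hblock hblock'
  obtain ⟨h2, ha⟩ := hl.2 _ hw (by omega)
  unfold oddAbove at ha
  omega

theorem Admissible.not_between (hs : l.Pairwise (· ≥ ·)) (hl : Admissible l) {u : ℕ}
    (hu1 : 1 ≤ u) (hu : u < (oddParts l).length) (heven : u % 2 = 0) {x : ℕ} (hx : x ∈ l) :
    ¬((oddParts l)[u] < x ∧ x < (oddParts l)[u - 1]) := by
  have hos := oddParts_pairwise hs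
  rintro ⟨hlt, hgt⟩
  have habove : oddAbove l x = u := by
    have h1 := (hos.lt_getElem_iff x (by omega : u - 1 < _)).mp hgt
    have h2 := (hos.lt_getElem_iff x hu).not.mp (not_lt.mpr hlt.le)
    unfold oddAbove
    omega
  rcases Nat.mod_two_eq_zero_or_one x with he | ho
  · have := hl.1 x hx he
    omega
  · have hpos := count_pos_iff.mpr hx
    have : (oddParts l)[u] = x :=
      (hos.getElem_eq_iff x hu).mpr ⟨by unfold oddAbove at habove; omega,
        by rw [count_oddParts ho]; unfold oddAbove at habove; omega⟩
    exact hlt.ne this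

theorem mem_Rset_iff : l ∈ Rset ↔ l ∈ Qset ∧ Admissible l := by
  refine ⟨fun hl => ⟨hl.1, fun _ hv he => oddAbove_odd_of_mem_Rset hl hv he,
    fun _ hv h2 => count_odd_of_mem_Rset hl hv h2⟩, fun ⟨hQ, hl⟩ => ?_⟩
  have hs := hQ.1.1
  refine ⟨hQ, fun hne => ?_, fun hne hlen => ?_, fun u hu1 hu hodd => ?_,
    fun u hu1 hu heven k hk => ?_⟩
  · rw [getD_eq_getElem _ _ (length_pos_iff.mpr hne)]
    exact hl.head_odd hs _
  · rw [getD_eq_getElem _ _ (by simpa [length_pos_iff] using hne)]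
    exact hl.last_odd hQ hlen (length_pos_iff.mpr hne)
  · rw [getD_eq_getElem _ _ (by omega), getD_eq_getElem _ _ (by omega)]
    exact hl.oddParts_getElem_lt hs hu1 (by omega) hodd
  · rw [getD_eq_getElem _ _ (by omega : u < _), getD_eq_getElem _ _ (by omega : u - 1 < _),
      getD_eq_getElem _ _ hk]
    exact hl.not_between hs hu1 (by omega) heven (getElem_mem hk)

end Rset

/-- The largest multiplicity of `v` in a member of `ℛ` whose odd multiplicities, and hence whose
numbers of odd parts above each value, have the same parities as in `c`. -/
def rCount (c : List ℕ) (v : ℕ) : ℕ :=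
  if v % 2 = 1 then
    if c.count v % 2 = 1 then 1 else if oddAbove c v % 2 = 1 ∧ 2 ≤ c.count v then 2 else 0
  else if oddAbove c v % 2 = 1 then c.count v else 0

def canonR (c : List ℕ) : List ℕ := c.dedup.flatMap fun v => replicate (rCount c v) v

def canonP (c : List ℕ) : List ℕ := c.diff (canonR c)

theorem count_flatMap_replicate {α : Type*} [DecidableEq α] {d : List α} (hd : d.Nodup)
    (g : α → ℕ) (v : α) :
    (d.flatMap fun w => replicate (g w) w).count v = if v ∈ d then g v else 0 := by
  induction d with
  | nil => simp
  | cons a t ih =>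
    rw [flatMap_cons, count_append, ih hd.of_cons, count_replicate]
    by_cases hva : v = a
    · subst hva
      simp [(nodup_cons.mp hd).1]
    · simp [hva, Ne.symm hva]

section Canonical

variable {c : List ℕ}

theorem rCount_le_count (c : List ℕ) (v : ℕ) : rCount c v ≤ c.count v := by
  unfold rCount
  split_ifs <;> omega

theorem rCount_mod_two {v : ℕ} (hv : v % 2 = 1) : rCount c v % 2 = c.count v % 2 := by
  unfold rCount
  split_ifs <;> omega

theorem count_le_rCount {r : List ℕ} (hr : Admissible r) (hle : ∀ v, r.count v ≤ c.count v)
    (hpar : ∀ v, v % 2 = 1 → r.count v % 2 = c.count v % 2) (v : ℕ) :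
    r.count v ≤ rCount c v := by
  have ha := oddAbove_mod_two_eq hpar v
  have hle := hle v
  unfold rCount
  rcases Nat.mod_two_eq_zero_or_one v with he | ho
  · have h : r.count v = 0 ∨ oddAbove r v % 2 = 1 :=
      (r.count v).eq_zero_or_pos.imp_right fun h => hr.1 v (count_pos_iff.mp h) he
    split_ifs <;> omega
  · have h : r.count v ≤ 1 ∨ (r.count v = 2 ∧ oddAbove r v % 2 = 1) :=
      (le_or_gt (r.count v) 1).imp_right fun h => hr.2 v ho h
    have := hpar v ho
    split_ifs <;> omega

theorem count_canonR (c : List ℕ) (v : ℕ) : (canonR c).count v = rCount c v := by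
  rw [canonR, count_flatMap_replicate (nodup_dedup c)]
  split_ifs with hv
  · rfl
  · have := rCount_le_count c v
    rw [mem_dedup] at hv
    rw [count_eq_zero_of_not_mem hv] at this
    omega

theorem count_canonP (c : List ℕ) (v : ℕ) : (canonP c).count v = c.count v - rCount c v := by
  rw [canonP, count_diff, count_canonR]

theorem canonR_append_canonP_perm (c : List ℕ) : (canonR c ++ canonP c).Perm c :=
  perm_iff_count.mpr fun v => by
    rw [count_append, count_canonP, count_canonR]
    have := rCount_le_count c v
    omega

theorem pairwise_canonR (hs : c.Pairwise (· ≥ ·)) : (canonR c).Pairwise (· ≥ ·) :=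
  pairwise_flatMap.mpr ⟨fun _ _ => pairwise_replicate.mpr (Or.inr le_rfl),
    (hs.sublist (dedup_sublist c)).imp fun h _ hx _ hy =>
      (eq_of_mem_replicate hx) ▸ (eq_of_mem_replicate hy) ▸ h⟩

theorem canonR_mem_Rset (hc : c ∈ Qset) : canonR c ∈ Rset := by
  have hpar : ∀ v, oddAbove (canonR c) v % 2 = oddAbove c v % 2 :=
    oddAbove_mod_two_eq fun w hw => by rw [count_canonR, rCount_mod_two hw]
  refine mem_Rset_iff.mpr ⟨⟨⟨pairwise_canonR hc.1.1, fun x hx => hc.1.2 x ?_⟩, fun j hj => ?_⟩,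
    fun v hv he => ?_, fun v hv h2 => ?_⟩
  · obtain ⟨w, hw, hxw⟩ := mem_flatMap.mp hx
    exact eq_of_mem_replicate hxw ▸ mem_dedup.mp hw
  · rw [count_canonR, rCount, if_neg (by omega)]
    split_ifs
    exacts [hc.2 j hj, Even.zero]
  · have hpos := count_pos_iff.mpr hv
    rw [count_canonR, rCount, if_neg (by omega)] at hpos
    split_ifs at hpos with h
    · rw [hpar]
      exact h
    · omega
  · rw [count_canonR, rCount, if_pos hv] at h2 ⊢
    rw [hpar]
    split_ifs at h2 ⊢ with h1 h3 <;> omega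

theorem canonP_mem_Ptilde (hc : c ∈ Qset) : canonP c ∈ Ptilde := by
  refine mem_Ptilde_iff.mpr ⟨⟨hc.1.1.sublist (diff_sublist _ _),
    fun x hx => hc.1.2 x ((diff_sublist _ _).subset hx)⟩, fun v => ?_⟩
  rw [count_canonP, Nat.even_iff]
  have := rCount_le_count c v
  rcases Nat.mod_two_eq_zero_or_one v with he | ho
  · have := Nat.even_iff.mp (hc.2 v he)
    unfold rCount
    split_ifs <;> omega
  · have := rCount_mod_two (c := c) ho
    omega

variable {r p : List ℕ}

theorem count_le_rCount_of_pmerge_eq (hr : r ∈ Rset) (hp : p ∈ Ptilde) (h : pmerge r p = c)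
    (v : ℕ) : r.count v ≤ rCount c v := by
  have hsum := count_add_count_of_pmerge_eq h
  have hev := (mem_Ptilde_iff.mp hp).2
  refine count_le_rCount (mem_Rset_iff.mp hr).2 (fun w => ?_) (fun w _ => ?_) v
  · have := hsum w
    omega
  · have := hsum w
    have := Nat.even_iff.mp (hev w)
    omega

theorem count_canonP_le_of_pmerge_eq (hr : r ∈ Rset) (hp : p ∈ Ptilde) (h : pmerge r p = c)
    (e : ℕ) : (canonP c).count e ≤ p.count e := by
  have := count_le_rCount_of_pmerge_eq hr hp h e
  have := count_add_count_of_pmerge_eq h e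
  rw [count_canonP]
  omega

theorem eq_canon_of_pmerge_eq (hc : c ∈ Qset) (hr : r ∈ Rset) (hp : p ∈ Ptilde)
    (h : pmerge r p = c) (hcount : ∀ e, 0 < e → p.count e = (canonP c).count e) :
    r = canonR c ∧ p = canonP c := by
  have hp_count : ∀ e, p.count e = (canonP c).count e := fun e => by
    rcases e.eq_zero_or_pos with rfl | he
    · rw [hp.1.count_zero, (canonP_mem_Ptilde hc).1.count_zero]
    · exact hcount e he
  have hr_count : ∀ e, r.count e = (canonR c).count e := fun e => by
    have := count_add_count_of_pmerge_eq h e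
    have := rCount_le_count c e
    rw [hp_count, count_canonP] at *
    rw [count_canonR]
    omega
  exact ⟨(perm_iff_count.mpr hr_count).eq_of_pairwise' hr.1.1.1 (pairwise_canonR hc.1.1),
    (perm_iff_count.mpr hp_count).eq_of_pairwise' hp.1.1 (canonP_mem_Ptilde hc).1.1⟩

end Canonical

/-- for every `𝐧` and `c ∈ 𝒬_𝐧` there exists `(r,p) ∈ ι̃⁻¹(c) ⊆ A_𝐧` with
`μ_e(p') ≥ μ_e(p)` for every `(r',p')` in the fiber and every positive `e`; moreover any
element of the fiber with `μ_e(p') = μ_e(p)` for all positive `e` equals `(r,p)`. -/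
theorem stmt7 (m : ℕ) (c : List ℕ) (hc : c ∈ QN m) :
    ∃ rp : List ℕ × List ℕ,
      (rp ∈ An m ∧ pmerge rp.1 rp.2 = c) ∧
      (∀ rp' : List ℕ × List ℕ, (rp' ∈ An m ∧ pmerge rp'.1 rp'.2 = c) →
        ∀ e, 0 < e → rp.2.count e ≤ rp'.2.count e) ∧
      (∀ rp' : List ℕ × List ℕ, (rp' ∈ An m ∧ pmerge rp'.1 rp'.2 = c) →
        (∀ e, 0 < e → rp'.2.count e = rp.2.count e) → rp' = rp) := by
  obtain ⟨hcQ, hsum⟩ := hc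
  have hperm := canonR_append_canonP_perm c
  refine ⟨(canonR c, canonP c), ⟨⟨canonR_mem_Rset hcQ, canonP_mem_Ptilde hcQ, ?_⟩,
    (pmerge_eq_iff_perm hcQ.1.1).mpr hperm⟩, ?_, ?_⟩
  · rw [← sum_append, hperm.sum_eq, hsum]
  · rintro ⟨r, p⟩ ⟨⟨hr, hp, -⟩, h⟩ e -
    exact count_canonP_le_of_pmerge_eq hr hp h e
  · rintro ⟨r, p⟩ ⟨⟨hr, hp, -⟩, h⟩ hcount
    obtain ⟨rfl, rfl⟩ := eq_canon_of_pmerge_eq hcQ hr hp h hcount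
    rfl
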